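/- arXiv:1102.2960 — 6 statements merged into one kernel-verified Lean document; each statement's English description precedes it below -/
import Mathlib

section
/- Let 𝒢 be a leveled graph over a finite set Q with |Q| = n and let F ⊆ Q. Then 𝒢 is co-Büchi accepting if and only if 𝒢 admits an odd co-Büchi ranking. -/
/-!
The ranking is the Kupferman–Vardi one. Starting from the whole graph, delete alternately the
vertices from which only finitely many vertices are reachable and the vertices from which no
`F`-vertex is reachable; the rank of a vertex is the step at which it is deleted. The set deleted
at a step is closed under reachability, so ranks do not increase along edges, and a path whose rank
settles on an even value `k` would be an infinite path inside a finite part of the `k`-th graph.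

If the graph is co-Büchi accepting, every nonempty graph left after deleting the finite vertices
has a vertex from which no `F`-vertex is reachable (otherwise a path could keep walking towards the
nearest `F`-vertex), and an infinite path from it is deleted at the next step. So every two steps
lower by one the width of the graph on all sufficiently high levels, and after `2n` steps only
finite vertices remain.

Conversely, a ranking is non-increasing along a path, hence eventually constant, hence eventually
odd if it is odd infinitely often; and odd vertices are not `F`-vertices.
-/

namespace CoBuchi

open Set Function

section Relations

variable {α : Type*} (R : α → α → Prop)

def IsPath (ρ : ℕ → α) : Prop := ∀ i, R (ρ i) (ρ (i + 1))

def induce (S : Set α) (a b : α) : Prop := a ∈ S ∧ b ∈ S ∧ R a b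

def reach (S : Set α) (a : α) : Set α := {b | Relation.ReflTransGen (induce R S) a b}

variable {R} {S : Set α} {a b : α}

lemma IsPath.shift {ρ : ℕ → α} (hρ : IsPath R ρ) (N : ℕ) : IsPath R (fun j => ρ (N + j)) :=
  fun j => hρ (N + j)

lemma mem_reach_self : a ∈ reach R S a := Relation.ReflTransGen.refl

lemma reach_subset_of_mem (h : b ∈ reach R S a) : reach R S b ⊆ reach R S a :=
  fun _ hc => h.trans hc

lemma mem_of_mem_reach (ha : a ∈ S) (h : b ∈ reach R S a) : b ∈ S := by
  induction h with
  | refl => exact ha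
  | tail _ hbc => exact hbc.2.1

lemma mem_reach_of_isPath {ρ : ℕ → α} (hS : ∀ i, ρ i ∈ S) (hρ : IsPath R ρ) (i : ℕ) :
    ρ i ∈ reach R S (ρ 0) := by
  induction i with
  | zero => exact mem_reach_self
  | succ i ih => exact ih.tail ⟨hS i, hS (i + 1), hρ i⟩

lemma exists_isPath_of_serial (h : ∀ a ∈ S, ∃ b ∈ S, R a b) (ha : a ∈ S) :
    ∃ ρ : ℕ → α, ρ 0 = a ∧ (∀ i, ρ i ∈ S) ∧ IsPath R ρ := by
  have hacc : ∀ a, Acc (fun b a => a ∈ S ∧ b ∈ S ∧ R a b) a → a ∉ S := fun a hacc =>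
    hacc.rec fun a _ ih ha =>
      let ⟨b, hb, hab⟩ := h a ha
      ih b ⟨ha, hb, hab⟩ hb
  obtain ⟨ρ, hρ0, hρ⟩ := not_acc_iff_exists_descending_chain.1 fun h => hacc a h ha
  exact ⟨ρ, hρ0, fun i => (hρ i).1, fun i => (hρ i).2.2⟩

end Relations

lemma exists_forall_odd_of_antitone {g : ℕ → ℕ} (hg : Antitone g)
    (h : {i | Odd (g i)}.Infinite) : ∃ N, ∀ i ≥ N, Odd (g i) := by
  obtain ⟨N, hN⟩ := WellFoundedLT.antitone_chain_condition hg
  obtain ⟨i, hi, hNi⟩ := h.exists_gt N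
  exact ⟨N, fun j hj => by rw [← hN j hj, hN i hNi.le]; exact hi⟩

section LeveledGraph

variable {Q : Type*} (E : Q × ℕ → Q × ℕ → Prop) (F : Set Q)

def IsLeveled : Prop := ∀ v v' : Q × ℕ, E v v' → v'.2 = v.2 + 1

def IsCoBuchiAccepting : Prop := ∀ ρ : ℕ → Q × ℕ, IsPath E ρ → {i | (ρ i).1 ∈ F}.Finite

def slice (S : Set (Q × ℕ)) (l : ℕ) : Set Q := {q | (q, l) ∈ S}

variable {E F} (hE : IsLeveled E)
include hE

lemma IsPath.level_eq {ρ : ℕ → Q × ℕ} (hρ : IsPath E ρ) (i : ℕ) : (ρ i).2 = (ρ 0).2 + i := by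
  induction i with
  | zero => rfl
  | succ i ih => rw [hE _ _ (hρ i), ih, add_assoc]

lemma IsPath.injective {ρ : ℕ → Q × ℕ} (hρ : IsPath E ρ) : Injective ρ := fun i j hij => by
  have := congrArg Prod.snd hij
  rw [hρ.level_eq hE i, hρ.level_eq hE j] at this
  omega

lemma level_le_of_mem_reach {S : Set (Q × ℕ)} {v w : Q × ℕ} (h : w ∈ reach E S v) :
    v.2 ≤ w.2 := by
  induction h with
  | refl => rfl
  | tail _ huw ih => exact ih.trans (hE _ _ huw.2.2 ▸ Nat.le_succ _)

/-- König's lemma, one step at a time: levels are finite, so `v` has finitely many successors. -/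
lemma exists_succ_infinite_reach [Finite Q] {S : Set (Q × ℕ)} {v : Q × ℕ}
    (h : (reach E S v).Infinite) : ∃ w, induce E S v w ∧ (reach E S w).Infinite := by
  by_contra! hfin
  have hsucc : {w | induce E S v w}.Finite :=
    (finite_univ.prod (finite_singleton (v.2 + 1))).subset
      fun w hw => mem_prod.2 ⟨mem_univ _, hE _ _ hw.2.2⟩
  refine h (((finite_singleton v).union (hsucc.biUnion hfin)).subset fun x hx => ?_)
  rcases hx.cases_head with rfl | ⟨w, hw, hwx⟩
  · exact .inl rfl
  · exact .inr (mem_biUnion hw hwx)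

/-- Otherwise some path keeps stepping towards the nearest reachable `F`-vertex, and so visits
`F` infinitely often. -/
lemma exists_forall_reach_notMem (hacc : IsCoBuchiAccepting E F) {S : Set (Q × ℕ)}
    (hser : ∀ v ∈ S, ∃ w ∈ S, E v w) (hS : S.Nonempty) :
    ∃ v ∈ S, ∀ w ∈ reach E S v, w.1 ∉ F := by
  by_contra! hreach
  let D : Q × ℕ → Set ℕ := fun v => {m | ∃ w ∈ reach E S v, w.1 ∈ F ∧ w.2 = v.2 + m}
  let d : Q × ℕ → ℕ := fun v => sInf (D v)
  have hd : ∀ v ∈ S, d v ∈ D v := fun v hv => by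
    obtain ⟨w, hw, hwF⟩ := hreach v hv
    have := level_le_of_mem_reach hE hw
    exact Nat.sInf_mem (s := D v) ⟨w.2 - v.2, w, hw, hwF, by omega⟩
  have hstep : ∀ v ∈ S, ∃ w ∈ S, E v w ∧ (v.1 ∈ F ∨ d w < d v) := by
    intro v hv
    obtain ⟨w, hw, hwF, hwl⟩ := hd v hv
    rcases hw.cases_head with rfl | ⟨u, hu, huw⟩
    · obtain ⟨u, huS, hvu⟩ := hser _ hv
      exact ⟨u, huS, hvu, .inl hwF⟩
    · have hul := hE _ _ hu.2.2
      have hlw := level_le_of_mem_reach hE huw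
      have : d u ≤ d v - 1 := Nat.sInf_le ⟨w, huw, hwF, by omega⟩
      exact ⟨u, hu.2.1, hu.2.2, .inr (by omega)⟩
  obtain ⟨v, hv⟩ := hS
  obtain ⟨ρ, -, -, hρ⟩ := exists_isPath_of_serial hstep hv
  obtain ⟨N, hN⟩ := (hacc ρ fun i => (hρ i).1).bddAbove
  obtain ⟨i, hi⟩ := WellFounded.not_rel_apply_succ (r := (· < ·)) fun i => d (ρ (N + 1 + i))
  exact hi ((hρ (N + 1 + i)).2.resolve_left fun h => absurd (hN h) (by omega))

end LeveledGraph

section Stages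

variable {Q : Type*} (E : Q × ℕ → Q × ℕ → Prop) (F : Set Q)

def Pruned (k : ℕ) (S : Set (Q × ℕ)) (v : Q × ℕ) : Prop :=
  if Even k then (reach E S v).Finite else ∀ w ∈ reach E S v, w.1 ∉ F

def stage : ℕ → Set (Q × ℕ)
  | 0 => univ
  | k + 1 => {v ∈ stage k | ¬ Pruned E F k (stage k) v}

/-- Junk value `0` for a vertex that is never pruned. -/
noncomputable def rank (v : Q × ℕ) : ℕ := sInf {k | v ∉ stage E F (k + 1)}

variable {E F} {k : ℕ} {S : Set (Q × ℕ)} {v w : Q × ℕ}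

lemma pruned_iff_of_even (hk : Even k) : Pruned E F k S v ↔ (reach E S v).Finite := by
  rw [Pruned, if_pos hk]

lemma pruned_iff_of_odd (hk : Odd k) : Pruned E F k S v ↔ ∀ w ∈ reach E S v, w.1 ∉ F := by
  rw [Pruned, if_neg (Nat.not_even_iff_odd.2 hk)]

lemma Pruned.of_mem_reach (h : Pruned E F k S v) (hw : w ∈ reach E S v) : Pruned E F k S w := by
  unfold Pruned at *
  split_ifs at h ⊢
  · exact h.subset (reach_subset_of_mem hw)
  · exact fun x hx => h x (reach_subset_of_mem hw hx)

lemma stage_antitone : Antitone (stage E F) := antitone_nat_of_succ_le fun _ _ hv => hv.1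

lemma exists_succ_mem_stage [Finite Q] (hE : IsLeveled E) (hk : Even k)
    (hv : v ∈ stage E F (k + 1)) : ∃ w ∈ stage E F (k + 1), E v w := by
  have hinf : (reach E (stage E F k) v).Infinite := fun h => hv.2 ((pruned_iff_of_even hk).2 h)
  obtain ⟨w, hvw, hw⟩ := exists_succ_infinite_reach hE hinf
  exact ⟨w, ⟨hvw.2.1, fun h => hw ((pruned_iff_of_even hk).1 h)⟩, hvw.2.2⟩

lemma exists_slice_ssubset [Finite Q] (hE : IsLeveled E) (hacc : IsCoBuchiAccepting E F)
    (hk : Even k) (hne : (stage E F (k + 1)).Nonempty) :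
    ∃ L, ∀ l ≥ L, slice (stage E F (k + 2)) l ⊂ slice (stage E F k) l := by
  have hser := fun v (hv : v ∈ stage E F (k + 1)) => exists_succ_mem_stage hE hk hv
  obtain ⟨v, hv, hfree⟩ := exists_forall_reach_notMem hE hacc hser hne
  obtain ⟨ρ, rfl, hρS, hρ⟩ := exists_isPath_of_serial hser hv
  refine ⟨(ρ 0).2, fun l hl => ?_⟩
  have hsub : slice (stage E F (k + 2)) l ⊆ slice (stage E F k) l :=
    fun _ hq => stage_antitone (by omega) hq
  set x := ρ (l - (ρ 0).2)
  have hx : (x.1, l) = x := Prod.ext rfl (by rw [hρ.level_eq hE]; omega)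
  have hpruned : Pruned E F (k + 1) (stage E F (k + 1)) x := by
    rw [pruned_iff_of_odd hk.add_one]
    exact fun w hw => hfree w (reach_subset_of_mem (mem_reach_of_isPath hρS hρ _) hw)
  refine (ssubset_iff_of_subset hsub).2 ⟨x.1, ?_, fun hq => ?_⟩
  · show (x.1, l) ∈ stage E F k
    rw [hx]
    exact (hρS _).1
  · replace hq : (x.1, l) ∈ stage E F (k + 2) := hq
    exact (hx ▸ hq).2 hpruned

lemma ncard_slice_stage_le [Finite Q] (hE : IsLeveled E) (hacc : IsCoBuchiAccepting E F) :
    ∀ i, ∃ L, ∀ l ≥ L, (slice (stage E F (2 * i)) l).ncard ≤ Nat.card Q - i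
  | 0 => ⟨0, fun _ _ => ncard_le_card _⟩
  | i + 1 => by
    rw [show 2 * (i + 1) = 2 * i + 2 by ring]
    obtain ⟨L, hL⟩ := ncard_slice_stage_le hE hacc i
    rcases (stage E F (2 * i + 1)).eq_empty_or_nonempty with hempty | hne
    · refine ⟨0, fun l _ => ?_⟩
      have : slice (stage E F (2 * i + 2)) l = ∅ :=
        eq_empty_of_forall_notMem fun q hq => by simpa [hempty] using hq.1
      simp [this]
    · obtain ⟨L', hL'⟩ := exists_slice_ssubset hE hacc (even_two_mul i) hne
      refine ⟨max L L', fun l hl => ?_⟩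
      have := ncard_lt_ncard (hL' l (le_of_max_le_right hl)) (toFinite _)
      have := hL l (le_of_max_le_left hl)
      omega

lemma stage_eq_empty [Finite Q] (hE : IsLeveled E) (hacc : IsCoBuchiAccepting E F) :
    stage E F (2 * Nat.card Q + 1) = ∅ := by
  obtain ⟨L, hL⟩ := ncard_slice_stage_le hE hacc (Nat.card Q)
  have hlow : ∀ v ∈ stage E F (2 * Nat.card Q), v.2 < L := fun v hv => by
    by_contra! hl
    have := (ncard_pos (s := slice (stage E F (2 * Nat.card Q)) v.2) (toFinite _)).2 ⟨v.1, hv⟩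
    have := hL v.2 hl
    omega
  refine eq_empty_of_forall_notMem fun v hv => hv.2 ?_
  rw [pruned_iff_of_even (even_two_mul _)]
  exact (finite_univ.prod (finite_Iio L)).subset
    fun w hw => ⟨trivial, hlow w (mem_of_mem_reach hv.1 hw)⟩

lemma mem_stage_of_le_rank (h : k ≤ rank E F v) : v ∈ stage E F k := by
  cases k with
  | zero => trivial
  | succ k => exact not_not.1 (Nat.notMem_of_lt_sInf h)

lemma rank_le_of_notMem (h : v ∉ stage E F (k + 1)) : rank E F v ≤ k := Nat.sInf_le h

section Ranking

variable {m : ℕ} (hm : stage E F (m + 1) = ∅)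
include hm

lemma rank_le (v : Q × ℕ) : rank E F v ≤ m := rank_le_of_notMem (hm ▸ notMem_empty v)

lemma pruned_rank (v : Q × ℕ) : Pruned E F (rank E F v) (stage E F (rank E F v)) v :=
  by_contra fun h => Nat.sInf_mem (s := {k | v ∉ stage E F (k + 1)})
    ⟨m, by simp [hm]⟩ ⟨mem_stage_of_le_rank le_rfl, h⟩

/-- Whatever is reachable from `v` inside its last stage is pruned together with `v`. -/
lemma rank_le_of_edge (e : E v w) : rank E F w ≤ rank E F v := by
  by_cases hw : w ∈ stage E F (rank E F v)
  · refine rank_le_of_notMem fun hw' => hw'.2 ((pruned_rank hm v).of_mem_reach ?_)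
    exact .single ⟨mem_stage_of_le_rank le_rfl, hw, e⟩
  · exact (lt_of_not_ge fun h => hw (mem_stage_of_le_rank h)).le

lemma notMem_of_odd_rank (h : Odd (rank E F v)) : v.1 ∉ F :=
  (pruned_iff_of_odd h).1 (pruned_rank hm v) v mem_reach_self

lemma infinite_setOf_odd_rank (hE : IsLeveled E) {ρ : ℕ → Q × ℕ} (hρ : IsPath E ρ) :
    {i | Odd (rank E F (ρ i))}.Infinite := by
  obtain ⟨N, hN⟩ := WellFoundedLT.antitone_chain_condition
    (antitone_nat_of_succ_le (f := fun i => rank E F (ρ i)) fun i => rank_le_of_edge hm (hρ i))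
  have hodd : Odd (rank E F (ρ N)) := by
    refine Nat.not_even_iff_odd.1 fun hev => ?_
    have hfin := (pruned_iff_of_even hev).1 (pruned_rank hm (ρ N))
    have htail : ∀ j, ρ (N + j) ∈ stage E F (rank E F (ρ N)) :=
      fun j => mem_stage_of_le_rank (hN _ (by omega)).le
    exact infinite_of_injective_forall_mem ((hρ.shift N).injective hE)
      (mem_reach_of_isPath htail (hρ.shift N)) hfin
  exact (Ici_infinite N).mono fun i hi => show Odd (rank E F (ρ i)) from hN i hi ▸ hodd

end Ranking

end Stages

end CoBuchi

open CoBuchi in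
theorem coBuchi_ranking_correct_general
    {Q : Type} [Fintype Q] (n : ℕ)
    (hcard : Fintype.card Q = n)
    (E : Q × ℕ → Q × ℕ → Prop)
    (hE : ∀ v v' : Q × ℕ, E v v' → v'.2 = v.2 + 1)
    (F : Set Q) :
    (∀ ρ : ℕ → Q × ℕ, (∀ i, E (ρ i) (ρ (i + 1))) → {i | (ρ i).1 ∈ F}.Finite)
    ↔ ∃ f : Q × ℕ → ℕ,
        (∀ v, f v ≤ 2 * n) ∧
        (∀ v, Odd (f v) → v.1 ∉ F) ∧
        (∀ v v', E v v' → f v' ≤ f v) ∧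
        (∀ ρ : ℕ → Q × ℕ, (∀ i, E (ρ i) (ρ (i + 1))) →
          {i | Odd (f (ρ i))}.Infinite) := by
  constructor
  · intro hacc
    have hm : stage E F (2 * n + 1) = ∅ := by
      rw [← hcard, ← Nat.card_eq_fintype_card]
      exact stage_eq_empty hE hacc
    exact ⟨rank E F, rank_le hm, fun _ => notMem_of_odd_rank hm, fun _ _ => rank_le_of_edge hm,
      fun _ => infinite_setOf_odd_rank hm hE⟩
  · rintro ⟨f, -, hodd, hanti, hinf⟩ ρ hρ
    obtain ⟨N, hN⟩ := exists_forall_odd_of_antitone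
      (antitone_nat_of_succ_le fun i => hanti _ _ (hρ i)) (hinf ρ hρ)
    exact (Set.finite_Iio N).subset fun i hi => not_le.1 fun hNi => hodd _ (hN i hNi) hi

theorem coBuchi_ranking_correct
    {Q : Type} [Fintype Q] (n : ℕ) (hn : 1 ≤ n)
    (hcard : Fintype.card Q = n)
    (E : Q × ℕ → Q × ℕ → Prop)
    (hE : ∀ v v' : Q × ℕ, E v v' → v'.2 = v.2 + 1)
    (F : Set Q) :
    (∀ ρ : ℕ → Q × ℕ, (∀ i, E (ρ i) (ρ (i + 1))) → {i | (ρ i).1 ∈ F}.Finite)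
    ↔ ∃ f : Q × ℕ → ℕ,
        (∀ v, f v ≤ 2 * n) ∧
        (∀ v, Odd (f v) → v.1 ∉ F) ∧
        (∀ v v', E v v' → f v' ≤ f v) ∧
        (∀ ρ : ℕ → Q × ℕ, (∀ i, E (ρ i) (ρ (i + 1))) →
          {i | Odd (f (ρ i))}.Infinite) :=
  coBuchi_ranking_correct_general n hcard E hE F
end

section
/- Let 𝒢 be a leveled graph over a finite set Q with |Q| = n, let I = {1, …, k} and let B : I → 2^Q. Then 𝒢 is GC accepting if and only if 𝒢 admits an odd GC ranking. -/
/-!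
STATEMENT 1: Let 𝒢 be a leveled graph over a finite set Q with |Q| = n, let
I = {1, …, k} and let B : I → 2^Q. Then 𝒢 is GC accepting if and only if 𝒢
admits an odd GC ranking.

A GC rank is modelled as a pair `(t, o) : ℕ × Option ℕ`: `(t, some u)` is an
odd GC rank with numeric rank `t ∈ {1,3,…,2n−1}` and index `u ∈ I`;
`(t, none)` is an even GC rank `t ∈ {0,2,…,2n}`.
-/

/-- A GC rank: numeric rank together with an optional index (present iff odd). -/
abbrev GCRank := ℕ × Option ℕ

/-- Validity of a GC rank with respect to `n` states and `k` indices. -/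
def GCRankValid (n k : ℕ) (r : GCRank) : Prop :=
  match r.2 with
  | some u => Odd r.1 ∧ r.1 ≤ 2 * n - 1 ∧ 1 ≤ u ∧ u ≤ k
  | none => Even r.1 ∧ r.1 ≤ 2 * n

/-!
An odd GC ranking makes every path end in vertices of one odd rank `⟨2i+1, j⟩`, none of which is
a `B(j)`-vertex, so the path is GC accepting.

Conversely, alternately delete from `𝒢` the finite vertices (those reaching only finitely many
vertices) and the `j`-free vertices (those reaching no `B(j)`-vertex) for a suitable index `j`; a
vertex's rank is the step at which it is deleted, and odd ranks carry the index of their step.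
After deleting finite vertices every remaining vertex has a successor (Kőnig), and then a free
vertex exists: otherwise finite paths through `B(1), …, B(k), B(1), …` could be chained into a path
violating GC acceptance. The free vertices reachable from it occupy every high enough level, so
each round shrinks every high enough level by one vertex, and nothing survives `n` rounds.
-/

open Relation Filter Set

section Paths

variable {α : Type*} {r : α → α → Prop}

theorem exists_seq_of_forall_exists {P : α → Prop} {R : ℕ → α → α → Prop}
    (h : ∀ n a, P a → ∃ b, P b ∧ R n a b) {a : α} (ha : P a) :
    ∃ x : ℕ → α, x 0 = a ∧ ∀ n, P (x n) ∧ R n (x n) (x (n + 1)) := by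
  have h' : ∀ n (b : Subtype P), ∃ c : Subtype P, R n b c := fun n b =>
    let ⟨c, hc, hbc⟩ := h n b b.2
    ⟨⟨c, hc⟩, hbc⟩
  choose g hg using h'
  let y : ℕ → Subtype P := fun n => Nat.rec (motive := fun _ => Subtype P) ⟨a, ha⟩ g n
  exact ⟨fun n => (y n).1, rfl, fun n => ⟨(y n).2, hg n (y n)⟩⟩

theorem Relation.TransGen.exists_path {a b : α} (h : TransGen r a b) :
    ∃ (n : ℕ) (p : ℕ → α), p 0 = a ∧ p (n + 1) = b ∧ ∀ d ≤ n, r (p d) (p (d + 1)) := by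
  induction h using TransGen.head_induction_on with
  | @single a hab => exact ⟨0, fun d => if d = 0 then a else b, by simp, by simp, by simpa using hab⟩
  | @head a c hac _ ih =>
    obtain ⟨n, p, rfl, hpn, hp⟩ := ih
    refine ⟨n + 1, fun | 0 => a | d + 1 => p d, rfl, hpn, ?_⟩
    rintro (_ | d) hd
    · exact hac
    · exact hp d (by omega)

theorem exists_seq_through_of_transGen {x : ℕ → α} (hx : ∀ s, TransGen r (x s) (x (s + 1))) :
    ∃ ρ : ℕ → α, (∀ i, r (ρ i) (ρ (i + 1))) ∧ ∀ s, ∃ i, s ≤ i ∧ ρ i = x s := by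
  choose n p hp0 hpn hp using fun s => (hx s).exists_path
  -- `(s, d)` is the position of the `d`-th vertex of the path from `x s` to `x (s + 1)`
  let next : ℕ × ℕ → ℕ × ℕ := fun sd => if sd.2 < n sd.1 then (sd.1, sd.2 + 1) else (sd.1 + 1, 0)
  let pos : ℕ → ℕ × ℕ := fun i => next^[i] (0, 0)
  have pos_succ (i : ℕ) : pos (i + 1) = next (pos i) := Function.iterate_succ_apply' ..
  have pos_le (i : ℕ) : (pos i).2 ≤ n (pos i).1 := by
    induction i with
    | zero => simp [pos]
    | succ i ih =>
      rw [pos_succ]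
      unfold next
      split_ifs with h <;> simp only <;> omega
  have pos_hit (s : ℕ) : ∃ i, s ≤ i ∧ pos i = (s, 0) := by
    induction s with
    | zero => exact ⟨0, le_rfl, rfl⟩
    | succ s ih =>
      obtain ⟨i, hsi, hi⟩ := ih
      have walk : ∀ d ≤ n s, pos (i + d) = (s, d) := by
        intro d hd
        induction d with
        | zero => exact hi
        | succ d ihd => rw [← add_assoc, pos_succ, ihd (by omega)]; simp [next, show d < n s by omega]
      exact ⟨i + n s + 1, by omega, by rw [pos_succ, walk _ le_rfl]; simp [next]⟩
  refine ⟨fun i => p (pos i).1 (pos i).2, fun i => ?_, fun s => ?_⟩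
  · show r (p (pos i).1 (pos i).2) (p (pos (i + 1)).1 (pos (i + 1)).2)
    have hle := pos_le i
    rw [pos_succ]
    generalize pos i = sd at hle ⊢
    obtain ⟨s, d⟩ := sd
    by_cases hd : d < n s
    · simpa [next, hd] using hp s d hle
    · obtain rfl : d = n s := by simp only at hle; omega
      simpa [next, hp0, hpn] using hp s (n s) le_rfl
  · obtain ⟨i, hsi, hi⟩ := pos_hit s
    exact ⟨i, hsi, by simp [hi, hp0]⟩

theorem infinite_setOf_reflTransGen_of_injective {ρ : ℕ → α} (hρ : ∀ i, r (ρ i) (ρ (i + 1)))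
    (hinj : Function.Injective ρ) : {b | ReflTransGen r (ρ 0) b}.Infinite := by
  refine infinite_of_injective_forall_mem hinj fun i => ?_
  induction i with
  | zero => exact ReflTransGen.refl
  | succ i ih => exact ih.tail (hρ i)

/-- Kőnig's lemma. -/
theorem exists_rel_infinite_setOf_reflTransGen (hfin : ∀ a, {b | r a b}.Finite) {a : α}
    (h : {b | ReflTransGen r a b}.Infinite) : ∃ b, r a b ∧ {c | ReflTransGen r b c}.Infinite := by
  by_contra! hcon
  refine h (((finite_singleton a).union ((hfin a).biUnion hcon)).subset fun c hc => ?_)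
  rcases hc.cases_head with rfl | ⟨b, hab, hbc⟩
  · exact Or.inl rfl
  · exact Or.inr (mem_biUnion hab hbc)

end Paths

namespace GC

variable {Q : Type*}

section Defs

variable (E : Q × ℕ → Q × ℕ → Prop) (B : ℕ → Set Q) (k : ℕ)

def IsLeveled : Prop := ∀ v v' : Q × ℕ, E v v' → v'.2 = v.2 + 1

def GCAccepting : Prop :=
  ∀ ρ : ℕ → Q × ℕ, (∀ i, E (ρ i) (ρ (i + 1))) → ∃ j, 1 ≤ j ∧ j ≤ k ∧ {i | (ρ i).1 ∈ B j}.Finite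

structure IsOddGCRanking (n : ℕ) (f : Q × ℕ → GCRank) : Prop where
  valid : ∀ v, GCRankValid n k (f v)
  not_mem : ∀ v j, (f v).2 = some j → v.1 ∉ B j
  rank_le : ∀ {v v'}, E v v' → (f v').1 ≤ (f v).1
  index_eq : ∀ {v v'}, E v v' → ∀ j j', (f v).2 = some j → (f v').2 = some j' →
    (f v).1 = (f v').1 → j = j'
  infinite_odd : ∀ ρ : ℕ → Q × ℕ, (∀ i, E (ρ i) (ρ (i + 1))) → {i | ((f (ρ i)).2).isSome}.Infinite

end Defs

variable {E : Q × ℕ → Q × ℕ → Prop} {B : ℕ → Set Q} {k : ℕ}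

theorem IsOddGCRanking.gcAccepting {n : ℕ} {f : Q × ℕ → GCRank} (hf : IsOddGCRanking E B k n f) :
    GCAccepting E B k := by
  intro ρ hρ
  obtain ⟨N, hN⟩ := WellFoundedLT.antitone_chain_condition
    (f := fun i => (f (ρ i)).1) (antitone_nat_of_succ_le fun i => hf.rank_le (hρ i))
  obtain ⟨i₀, hodd, hi₀⟩ := (hf.infinite_odd ρ hρ).exists_gt N
  obtain ⟨j, hj⟩ := Option.isSome_iff_exists.mp hodd
  have hj_mem : 1 ≤ j ∧ j ≤ k := by
    have := hf.valid (ρ i₀)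
    rw [GCRankValid, hj] at this
    exact this.2.2
  -- past `N` the numeric rank is constant and odd, so the index can never change
  have hindex (d : ℕ) : (f (ρ (i₀ + d))).2 = some j := by
    induction d with
    | zero => exact hj
    | succ d ih =>
      have hrank : (f (ρ (i₀ + d))).1 = (f (ρ (i₀ + d + 1))).1 :=
        (hN _ (by omega)).symm.trans (hN _ (by omega))
      obtain ⟨j', hj'⟩ : ∃ j', (f (ρ (i₀ + d + 1))).2 = some j' := by
        have hv := hf.valid (ρ (i₀ + d))
        have hv' := hf.valid (ρ (i₀ + d + 1))
        rw [GCRankValid, ih] at hv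
        rcases h' : (f (ρ (i₀ + d + 1))).2 with _ | j'
        · rw [GCRankValid, h', ← hrank] at hv'
          exact absurd hv'.1 (Nat.not_even_iff_odd.mpr hv.1)
        · exact ⟨j', rfl⟩
      rw [← add_assoc, hj', hf.index_eq (hρ _) j j' ih hj' hrank]
  refine ⟨j, hj_mem.1, hj_mem.2, (finite_Iio i₀).subset fun i hi => ?_⟩
  rw [mem_Iio]
  by_contra! hle
  obtain ⟨d, rfl⟩ := Nat.exists_eq_add_of_le hle
  exact hf.not_mem _ j (hindex d) hi

section Reach

variable (E B)

def EdgeIn (T : Set (Q × ℕ)) (a b : Q × ℕ) : Prop := a ∈ T ∧ b ∈ T ∧ E a b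

abbrev ReachIn (T : Set (Q × ℕ)) : Q × ℕ → Q × ℕ → Prop := ReflTransGen (EdgeIn E T)

def IsFiniteVertex (T : Set (Q × ℕ)) (v : Q × ℕ) : Prop := {w | ReachIn E T v w}.Finite

def IsFreeVertex (T : Set (Q × ℕ)) (j : ℕ) (v : Q × ℕ) : Prop :=
  v ∈ T ∧ ∀ w, ReachIn E T v w → w.1 ∉ B j

end Reach

theorem IsFiniteVertex.of_edgeIn {T : Set (Q × ℕ)} {v v' : Q × ℕ} (hv : IsFiniteVertex E T v)
    (h : EdgeIn E T v v') : IsFiniteVertex E T v' :=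
  hv.subset fun _ hw => ReflTransGen.head h hw

theorem IsFreeVertex.of_edgeIn {T : Set (Q × ℕ)} {j : ℕ} {v v' : Q × ℕ}
    (hv : IsFreeVertex E B T j v) (h : EdgeIn E T v v') : IsFreeVertex E B T j v' :=
  ⟨h.2.1, fun w hw => hv.2 w (ReflTransGen.head h hw)⟩

theorem IsLeveled.level_path (hE : IsLeveled E) {ρ : ℕ → Q × ℕ} (hρ : ∀ i, E (ρ i) (ρ (i + 1)))
    (i : ℕ) : (ρ i).2 = (ρ 0).2 + i := by
  induction i with
  | zero => rfl
  | succ i ih => rw [hE _ _ (hρ i), ih, add_assoc]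

theorem IsLeveled.injective_path (hE : IsLeveled E) {ρ : ℕ → Q × ℕ}
    (hρ : ∀ i, E (ρ i) (ρ (i + 1))) : Function.Injective ρ := fun a b hab => by
  have ha := hE.level_path hρ a
  rw [hab, hE.level_path hρ b] at ha
  omega

theorem IsLeveled.finite_edgeIn [Finite Q] (hE : IsLeveled E) (T : Set (Q × ℕ)) (v : Q × ℕ) :
    {u | EdgeIn E T v u}.Finite :=
  (finite_univ.prod (finite_singleton (v.2 + 1))).subset fun _ hu => ⟨trivial, hE _ _ hu.2.2⟩

theorem IsLeveled.exists_at_level (hE : IsLeveled E) {P : Q × ℕ → Prop}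
    (hP : ∀ v, P v → ∃ u, P u ∧ E v u) {v : Q × ℕ} (hv : P v) {l : ℕ} (hl : v.2 ≤ l) :
    ∃ q, P (q, l) := by
  obtain ⟨ρ, rfl, hρ⟩ := exists_seq_of_forall_exists (R := fun _ => E) (fun _ => hP) hv
  have hlevel := hE.level_path (fun i => (hρ i).2) (l - (ρ 0).2)
  refine ⟨(ρ (l - (ρ 0).2)).1, ?_⟩
  convert (hρ (l - (ρ 0).2)).1 using 1
  exact Prod.ext rfl (by omega)

theorem GCAccepting.exists_isFreeVertex (hk : 1 ≤ k) (hacc : GCAccepting E B k)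
    {T : Set (Q × ℕ)} (hT : ∀ v ∈ T, ∃ u ∈ T, E v u) (hne : T.Nonempty) :
    ∃ j, 1 ≤ j ∧ j ≤ k ∧ ∃ v, IsFreeVertex E B T j v := by
  by_contra! hfree
  -- a path through `T` that visits `B 1, …, B k, B 1, …` in turn
  have step (s : ℕ) (a : Q × ℕ) (ha : a ∈ T) :
      ∃ b, b ∈ T ∧ TransGen (EdgeIn E T) a b ∧ b.1 ∈ B (s % k + 1) := by
    obtain ⟨u, hu, hau⟩ := hT a ha
    have hnot := hfree (s % k + 1) (by omega) (Nat.mod_lt s hk) u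
    simp only [IsFreeVertex, not_and, not_forall, not_not] at hnot
    obtain ⟨w, huw, hw⟩ := hnot hu
    have hwT : w ∈ T := by
      rcases huw.cases_tail with rfl | ⟨_, _, he⟩
      exacts [hu, he.2.1]
    exact ⟨w, hwT, TransGen.head' ⟨ha, hu, hau⟩ huw, hw⟩
  obtain ⟨v₀, hv₀⟩ := hne
  obtain ⟨x, -, hx⟩ := exists_seq_of_forall_exists step hv₀
  obtain ⟨ρ, hρ, hρx⟩ := exists_seq_through_of_transGen fun s => (hx s).2.1
  obtain ⟨j, hj, hjk, hfin⟩ := hacc ρ fun i => (hρ i).2.2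
  refine Nat.frequently_atTop_iff_infinite.mp (frequently_atTop.mpr fun N => ?_) hfin
  obtain ⟨s, hNs, hs⟩ := frequently_atTop.mp (Nat.frequently_mod_eq (show j - 1 < k by omega)) N
  obtain ⟨i, hsi, hi⟩ := hρx (s + 1)
  refine ⟨i, by omega, ?_⟩
  rw [hi, show j = s % k + 1 by omega]
  exact (hx s).2.2

section Construction

variable (E B k)

open Classical in
noncomputable def freeIndex (T : Set (Q × ℕ)) : ℕ :=
  if h : ∃ j, 1 ≤ j ∧ j ≤ k ∧ ∃ v, IsFreeVertex E B T j v then h.choose else 1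

def removedAt (t : ℕ) (T : Set (Q × ℕ)) : Set (Q × ℕ) :=
  if Even t then {v | IsFiniteVertex E T v} else {v | IsFreeVertex E B T (freeIndex E B k T) v}

noncomputable def stage : ℕ → Set (Q × ℕ)
  | 0 => univ
  | t + 1 => stage t \ removedAt E B k t (stage t)

open Classical in
noncomputable def rank [Fintype Q] (v : Q × ℕ) : ℕ :=
  Nat.findGreatest (fun t => v ∈ stage E B k t) (2 * Fintype.card Q)

noncomputable def gcRanking [Fintype Q] (v : Q × ℕ) : GCRank :=
  (rank E B k v, if Even (rank E B k v) then none
    else some (freeIndex E B k (stage E B k (rank E B k v))))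

end Construction

theorem freeIndex_mem (hk : 1 ≤ k) (T : Set (Q × ℕ)) :
    1 ≤ freeIndex E B k T ∧ freeIndex E B k T ≤ k := by
  unfold freeIndex
  split_ifs with h
  exacts [⟨h.choose_spec.1, h.choose_spec.2.1⟩, ⟨le_rfl, hk⟩]

theorem exists_isFreeVertex_freeIndex {T : Set (Q × ℕ)}
    (h : ∃ j, 1 ≤ j ∧ j ≤ k ∧ ∃ v, IsFreeVertex E B T j v) :
    ∃ v, IsFreeVertex E B T (freeIndex E B k T) v := by
  rw [freeIndex, dif_pos h]
  exact h.choose_spec.2.2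

theorem mem_removedAt_of_edgeIn {t : ℕ} {T : Set (Q × ℕ)} {v v' : Q × ℕ}
    (hv : v ∈ removedAt E B k t T) (h : EdgeIn E T v v') : v' ∈ removedAt E B k t T := by
  unfold removedAt at hv ⊢
  split_ifs at hv ⊢
  exacts [IsFiniteVertex.of_edgeIn hv h, IsFreeVertex.of_edgeIn hv h]

theorem stage_succ (t : ℕ) :
    stage E B k (t + 1) = stage E B k t \ removedAt E B k t (stage E B k t) := rfl

theorem stage_antitone : Antitone (stage E B k) :=
  antitone_nat_of_succ_le fun t => (stage_succ t).trans_le sdiff_subset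

theorem exists_mem_stage_succ_of_even [Finite Q] (hE : IsLeveled E) {t : ℕ} (ht : Even t) :
    ∀ v ∈ stage E B k (t + 1), ∃ u ∈ stage E B k (t + 1), E v u := by
  intro v hv
  rw [stage_succ, removedAt, if_pos ht] at hv ⊢
  obtain ⟨u, hvu, hu⟩ := exists_rel_infinite_setOf_reflTransGen (hE.finite_edgeIn _) hv.2
  exact ⟨u, ⟨hvu.2.1, hu⟩, hvu.2.2⟩

section Termination

variable [Fintype Q] (hE : IsLeveled E) (hk : 1 ≤ k) (hacc : GCAccepting E B k)
include hE hk hacc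

theorem eventually_exists_mem_stage_not_mem_stage_succ {i : ℕ}
    (hne : (stage E B k (2 * i + 1)).Nonempty) :
    ∀ᶠ l in atTop, ∃ q, (q, l) ∈ stage E B k (2 * i + 1) ∧ (q, l) ∉ stage E B k (2 * i + 2) := by
  set T := stage E B k (2 * i + 1)
  have hT := exists_mem_stage_succ_of_even hE (B := B) (k := k) (even_two_mul i)
  obtain ⟨v, hv⟩ := exists_isFreeVertex_freeIndex (hacc.exists_isFreeVertex hk hT hne)
  have hfree : ∀ w, IsFreeVertex E B T (freeIndex E B k T) w →
      ∃ u, IsFreeVertex E B T (freeIndex E B k T) u ∧ E w u := fun w hw =>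
    let ⟨u, hu, hwu⟩ := hT w hw.1
    ⟨u, hw.of_edgeIn ⟨hw.1, hu, hwu⟩, hwu⟩
  filter_upwards [eventually_ge_atTop v.2] with l hl
  obtain ⟨q, hq⟩ := hE.exists_at_level hfree hv hl
  refine ⟨q, hq.1, fun h => ?_⟩
  rw [stage_succ, removedAt, if_neg (by simp)] at h
  exact h.2 hq

theorem eventually_ncard_stage_le (i : ℕ) :
    ∀ᶠ l in atTop, {q | (q, l) ∈ stage E B k (2 * i + 1)}.ncard ≤ Fintype.card Q - i := by
  induction i with
  | zero => exact Eventually.of_forall fun _ => (ncard_le_card _).trans_eq Nat.card_eq_fintype_card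
  | succ i ih =>
    rcases (stage E B k (2 * i + 1)).eq_empty_or_nonempty with hempty | hne
    · refine Eventually.of_forall fun l => ?_
      have : {q | (q, l) ∈ stage E B k (2 * (i + 1) + 1)} = ∅ :=
        eq_empty_of_forall_notMem fun q hq => by
          simpa [hempty] using stage_antitone (show 2 * i + 1 ≤ 2 * (i + 1) + 1 by omega) hq
      simp [this]
    filter_upwards [ih, eventually_exists_mem_stage_not_mem_stage_succ hE hk hacc hne]
      with l hle ⟨q, hq, hq'⟩
    have hsub : {q | (q, l) ∈ stage E B k (2 * (i + 1) + 1)} ⊆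
        {q | (q, l) ∈ stage E B k (2 * i + 1)} := fun q hq =>
      stage_antitone (show 2 * i + 1 ≤ 2 * (i + 1) + 1 by omega) hq
    have := ncard_lt_ncard <| (ssubset_iff_of_subset hsub).mpr
      ⟨q, hq, fun h => hq' (stage_antitone (show 2 * i + 2 ≤ 2 * (i + 1) + 1 by omega) h)⟩
    omega

theorem stage_eq_empty : stage E B k (2 * Fintype.card Q + 1) = ∅ := by
  refine eq_empty_of_forall_notMem fun v hv => ?_
  have hT := exists_mem_stage_succ_of_even hE (B := B) (k := k) (even_two_mul (Fintype.card Q))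
  obtain ⟨l, hl, hvl⟩ :=
    ((eventually_ncard_stage_le hE hk hacc _).and (eventually_ge_atTop v.2)).exists
  obtain ⟨q, hq⟩ := hE.exists_at_level (fun w hw => hT w hw) hv hvl
  rw [Nat.sub_self, Nat.le_zero, ncard_eq_zero] at hl
  exact hl.subset hq

end Termination

section Ranking

variable [Fintype Q]

open Classical in
theorem mem_stage_rank (v : Q × ℕ) : v ∈ stage E B k (rank E B k v) :=
  Nat.findGreatest_spec (P := fun t => v ∈ stage E B k t) (Nat.zero_le _) (mem_univ v)

open Classical in
theorem rank_le (v : Q × ℕ) : rank E B k v ≤ 2 * Fintype.card Q :=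
  Nat.findGreatest_le _

variable (hE : IsLeveled E) (hk : 1 ≤ k) (hacc : GCAccepting E B k)
include hE hk hacc

open Classical in
theorem mem_removedAt_rank (v : Q × ℕ) :
    v ∈ removedAt E B k (rank E B k v) (stage E B k (rank E B k v)) := by
  have hnot : v ∉ stage E B k (rank E B k v + 1) := by
    rcases (rank_le v).lt_or_eq with hlt | heq
    · exact Nat.findGreatest_is_greatest (Nat.lt_succ_self _) hlt
    · rw [heq, stage_eq_empty hE hk hacc]
      exact notMem_empty v
  rw [stage_succ] at hnot
  by_contra h
  exact hnot ⟨mem_stage_rank v, h⟩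

theorem rank_le_of_edge {v v' : Q × ℕ} (h : E v v') : rank E B k v' ≤ rank E B k v := by
  by_contra! hlt
  have hv' := mem_stage_rank (E := E) (B := B) (k := k) v'
  have hnot := mem_removedAt_of_edgeIn (mem_removedAt_rank hE hk hacc v)
    ⟨mem_stage_rank v, stage_antitone hlt.le hv', h⟩
  exact (stage_antitone hlt hv').2 hnot

theorem not_even_rank_of_path {ρ : ℕ → Q × ℕ} (hρ : ∀ i, E (ρ i) (ρ (i + 1)))
    (hconst : ∀ i, rank E B k (ρ i) = rank E B k (ρ 0)) : ¬Even (rank E B k (ρ 0)) := by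
  intro heven
  have hfin := mem_removedAt_rank hE hk hacc (ρ 0)
  rw [removedAt, if_pos heven] at hfin
  have hmem (i : ℕ) : ρ i ∈ stage E B k (rank E B k (ρ 0)) := hconst i ▸ mem_stage_rank (ρ i)
  exact infinite_setOf_reflTransGen_of_injective (fun i => ⟨hmem i, hmem (i + 1), hρ i⟩)
    (hE.injective_path hρ) hfin

theorem isOddGCRanking_gcRanking :
    IsOddGCRanking E B k (Fintype.card Q) (gcRanking E B k) where
  valid v := by
    unfold gcRanking GCRankValid
    split_ifs with heven
    · exact ⟨heven, rank_le v⟩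
    · obtain ⟨m, hm⟩ := Nat.not_even_iff_odd.mp heven
      have := rank_le (E := E) (B := B) (k := k) v
      exact ⟨⟨m, hm⟩, by omega, freeIndex_mem hk _⟩
  not_mem v j hj := by
    have hrem := mem_removedAt_rank hE hk hacc v
    unfold gcRanking at hj
    unfold removedAt at hrem
    split_ifs at hj hrem
    cases hj
    exact hrem.2 v ReflTransGen.refl
  rank_le h := rank_le_of_edge hE hk hacc h
  index_eq _ j j' hj hj' hrank := by
    simp only [gcRanking] at hj hj' hrank
    rw [hrank] at hj
    exact Option.some_injective _ (hj.symm.trans hj')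
  infinite_odd ρ hρ := by
    obtain ⟨N, hN⟩ := WellFoundedLT.antitone_chain_condition (f := fun i => rank E B k (ρ i))
      (antitone_nat_of_succ_le fun i => rank_le_of_edge hE hk hacc (hρ i))
    have hodd := not_even_rank_of_path hE hk hacc (ρ := fun d => ρ (N + d))
      (fun d => hρ (N + d)) (fun d => (hN _ (by omega)).symm)
    refine (Ici_infinite N).mono fun i (hi : N ≤ i) => ?_
    simp_all [gcRanking, ← hN i hi]

end Ranking

end GC

theorem gc_ranking_correct_general
    {Q : Type} [Fintype Q] (n k : ℕ) (hk : 1 ≤ k)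
    (hcard : Fintype.card Q = n)
    (E : Q × ℕ → Q × ℕ → Prop)
    (hE : ∀ v v' : Q × ℕ, E v v' → v'.2 = v.2 + 1)
    (B : ℕ → Set Q) :
    -- 𝒢 is GC accepting
    (∀ ρ : ℕ → Q × ℕ, (∀ i, E (ρ i) (ρ (i + 1))) →
        ∃ j, 1 ≤ j ∧ j ≤ k ∧ {i | (ρ i).1 ∈ B j}.Finite)
    ↔ -- 𝒢 admits an odd GC ranking
      ∃ f : Q × ℕ → GCRank,
        (∀ v, GCRankValid n k (f v)) ∧
        -- (1) odd rank with index j → not a B(j)-vertex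
        (∀ v j, (f v).2 = some j → v.1 ∉ B j) ∧
        -- (2) edges: numeric ranks non-increasing, and equal numeric odd ranks
        -- have equal index
        (∀ v v', E v v' → (f v').1 ≤ (f v).1 ∧
          (∀ j j', (f v).2 = some j → (f v').2 = some j' →
            (f v).1 = (f v').1 → j = j')) ∧
        -- odd: every infinite path visits infinitely many odd vertices
        (∀ ρ : ℕ → Q × ℕ, (∀ i, E (ρ i) (ρ (i + 1))) →
          {i | ((f (ρ i)).2).isSome}.Infinite) := by
  subst hcard
  constructor
  · intro hacc
    have hf := GC.isOddGCRanking_gcRanking hE hk hacc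
    exact ⟨_, hf.valid, hf.not_mem, fun _ _ h => ⟨hf.rank_le h, hf.index_eq h⟩, hf.infinite_odd⟩
  · rintro ⟨f, hvalid, hnot_mem, hedge, hodd⟩
    exact GC.IsOddGCRanking.gcAccepting
      ⟨hvalid, hnot_mem, fun h => (hedge _ _ h).1, fun h => (hedge _ _ h).2, hodd⟩

theorem gc_ranking_correct
    {Q : Type} [Fintype Q] (n k : ℕ) (hn : 1 ≤ n) (hk : 1 ≤ k)
    (hcard : Fintype.card Q = n)
    (E : Q × ℕ → Q × ℕ → Prop)
    (hE : ∀ v v' : Q × ℕ, E v v' → v'.2 = v.2 + 1)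
    (B : ℕ → Set Q) :
    -- 𝒢 is GC accepting
    (∀ ρ : ℕ → Q × ℕ, (∀ i, E (ρ i) (ρ (i + 1))) →
        ∃ j, 1 ≤ j ∧ j ≤ k ∧ {i | (ρ i).1 ∈ B j}.Finite)
    ↔ -- 𝒢 admits an odd GC ranking
      ∃ f : Q × ℕ → GCRank,
        (∀ v, GCRankValid n k (f v)) ∧
        -- (1) odd rank with index j → not a B(j)-vertex
        (∀ v j, (f v).2 = some j → v.1 ∉ B j) ∧
        -- (2) edges: numeric ranks non-increasing, and equal numeric odd ranks
        -- have equal index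
        (∀ v v', E v v' → (f v').1 ≤ (f v).1 ∧
          (∀ j j', (f v).2 = some j → (f v').2 = some j' →
            (f v).1 = (f v').1 → j = j')) ∧
        -- odd: every infinite path visits infinitely many odd vertices
        (∀ ρ : ℕ → Q × ℕ, (∀ i, E (ρ i) (ρ (i + 1))) →
          {i | ((f (ρ i)).2).isSome}.Infinite) :=
  gc_ranking_correct_general n k hk hcard E hE B
end

section
/- Every Mini-increasing sequence over I has length at most min(n, k). Consequently, the increasing tree of sets T(n, k, B) has height at most min(n, k). -/
/-!
Common definitions. `Q` is a finite set, `I = {1,…,k}` and `B : I → 2^Q`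
(modelled as `B : ℕ → Set Q` used on indices in `{1,…,k}`). For a finite
sequence `α` over `I` (a `List ℕ`): `U(α) = ∪_{i} B(α[i])`,
`Cover(α) = { j ∈ I : B(j) ⊆ U(α) }`, and `Mini(α)` is the set of minimal
(and least-index among ties) extensions. A Mini-increasing sequence is a
nonempty `α` with `α[i] ∈ Mini(α[1..i−1])` for all positions `i`; these are
exactly the non-root nodes of the increasing tree of sets `T(n,k,B)`.
-/

section
variable {Q : Type}

/-- `U(α) = ∪_{i=1}^{|α|} B(α[i])`. -/
def UB (B : ℕ → Set Q) (α : List ℕ) : Set Q := {q | ∃ j ∈ α, q ∈ B j}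

/-- `Cover(α) = { j ∈ I : B(j) ⊆ U(α) }` where `I = {1,…,k}`. -/
def Cover (B : ℕ → Set Q) (k : ℕ) (α : List ℕ) : Set ℕ :=
  {j | 1 ≤ j ∧ j ≤ k ∧ B j ⊆ UB B α}

/-- `Mini(α)`: the `j ∈ I \ Cover(α)` minimally (and with least index among
ties) extending `U(α)`. -/
def Mini (B : ℕ → Set Q) (k : ℕ) (α : List ℕ) : Set ℕ :=
  {j | (1 ≤ j ∧ j ≤ k ∧ j ∉ Cover B k α) ∧
    ∀ j', 1 ≤ j' → j' ≤ k → j' ∉ Cover B k α →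
      (j' ≠ j → ¬ (B j' ∪ UB B α ⊂ B j ∪ UB B α)) ∧
      (j' < j → B j' ∪ UB B α ≠ B j ∪ UB B α)}

/-- A Mini-increasing sequence: nonempty, and each entry belongs to `Mini` of
the preceding prefix (0-indexed). -/
def MiniIncreasing (B : ℕ → Set Q) (k : ℕ) (α : List ℕ) : Prop :=
  α ≠ [] ∧ ∀ i j, α[i]? = some j → j ∈ Mini B k (α.take i)

end

/-!
STATEMENT 8: Every Mini-increasing sequence over I has length at most
min(n, k). Consequently, the increasing tree of sets T(n, k, B) has height at
most min(n, k).
-/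

theorem miniIncreasing_length_le
    {Q : Type} [Fintype Q] (n k : ℕ) (hn : 1 ≤ n) (hk : 1 ≤ k)
    (hcard : Fintype.card Q = n) (B : ℕ → Set Q)
    (α : List ℕ) (hα : MiniIncreasing B k α) :
    α.length ≤ min n k := by
  obtain ⟨hne, hmini⟩ := hα
  have key : ∀ i (h : i < α.length), α[i] ∈ Mini B k (α.take i) := by
    intro i h
    exact hmini i _ (List.getElem?_eq_getElem h)
  -- UB monotone under list inclusion
  have UBmono : ∀ {l l' : List ℕ}, (∀ x ∈ l, x ∈ l') → UB B l ⊆ UB B l' := by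
    intro l l' h q hq
    obtain ⟨j, hj, hqj⟩ := hq
    exact ⟨j, h j hj, hqj⟩
  -- proper inclusion at each step
  have hstep : ∀ i (h : i < α.length), UB B (α.take i) ⊂ UB B (α.take (i+1)) := by
    intro i h
    obtain ⟨⟨h1, h2, hnc⟩, _⟩ := key i h
    have hnsub : ¬ B α[i] ⊆ UB B (α.take i) := by
      intro hs; exact hnc ⟨h1, h2, hs⟩
    obtain ⟨q, hqB, hqn⟩ := Set.not_subset.mp hnsub
    have htake : α.take (i+1) = α.take i ++ [α[i]] := by
      rw [List.take_succ, List.getElem?_eq_getElem h]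
      rfl
    constructor
    · apply UBmono
      intro x hx
      rw [htake]
      exact List.mem_append_left _ hx
    · intro hs
      apply hqn
      have hq' : q ∈ UB B (α.take (i+1)) := by
        refine ⟨α[i], ?_, hqB⟩
        rw [htake]; exact List.mem_append_right _ (List.mem_singleton.mpr rfl)
      exact hs hq'
  -- length ≤ n via ncard
  have hcard_le : ∀ i, i ≤ α.length → i ≤ (UB B (α.take i)).ncard := by
    intro i
    induction i with
    | zero => simp
    | succ i ih =>
      intro h
      have hi : i < α.length := h
      have hlt := Set.ncard_lt_ncard (hstep i hi) (Set.toFinite _)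
      have := ih (le_of_lt hi)
      omega
  have hlen_n : α.length ≤ n := by
    have h1 := hcard_le α.length le_rfl
    have h2 : (UB B (α.take α.length)).ncard ≤ (Set.univ : Set Q).ncard :=
      Set.ncard_le_ncard (Set.subset_univ _) (Set.toFinite _)
    have h3 : (Set.univ : Set Q).ncard = n := by
      rw [Set.ncard_univ, Nat.card_eq_fintype_card, hcard]
    omega
  -- nodup
  have hnd : α.Nodup := by
    rw [List.nodup_iff_getElem?_ne_getElem?]
    intro i j hij hj hconsec
    have hi : i < α.length := lt_trans hij hj
    rw [List.getElem?_eq_getElem hi, List.getElem?_eq_getElem hj] at hconsec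
    have heq : α[i] = α[j] := Option.some_injective _ hconsec
    obtain ⟨⟨h1, h2, hnc⟩, _⟩ := key j hj
    apply hnc
    refine ⟨h1, h2, ?_⟩
    -- B α[j] = B α[i] ⊆ UB (take (i+1)) ⊆ UB (take j)
    have hsub1 : B α[j] ⊆ UB B (α.take (i+1)) := by
      intro q hq
      refine ⟨α[i], ?_, heq ▸ hq⟩
      have htake : α.take (i+1) = α.take i ++ [α[i]] := by
        rw [List.take_succ, List.getElem?_eq_getElem hi]; rfl
      rw [htake]; exact List.mem_append_right _ (List.mem_singleton.mpr rfl)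
    refine hsub1.trans (UBmono ?_)
    intro x hx
    have hpref : α.take (i+1) <+: α.take j := by
      rw [show α.take (i+1) = (α.take j).take (i+1) by
        rw [List.take_take]; congr 1; omega]
      exact List.take_prefix _ _
    exact hpref.subset hx
  have hlen_k : α.length ≤ k := by
    have hcardfin : α.toFinset.card = α.length := List.toFinset_card_of_nodup hnd
    have hsub : α.toFinset ⊆ Finset.Icc 1 k := by
      intro j hj
      rw [List.mem_toFinset] at hj
      obtain ⟨i, hi, rfl⟩ := List.mem_iff_getElem.mp hj
      obtain ⟨⟨h1, h2, _⟩, _⟩ := key i hi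
      exact Finset.mem_Icc.mpr ⟨h1, h2⟩
    have := Finset.card_le_card hsub
    rw [hcardfin, Nat.card_Icc] at this
    omega
  exact le_min hlen_n hlen_k
end

section
/- The number of Mini-increasing sequences satisfies |T(n, k, B)| ≤ μ · k^μ, where μ = min(n, k). -/
/-!
STATEMENT 10: The number of Mini-increasing sequences satisfies
|T(n, k, B)| ≤ μ · k^μ, where μ = min(n, k).
-/

lemma aux_chain (g : ℕ → ℕ) (ℓ : ℕ) (h : ∀ i < ℓ, g i < g (i+1)) : g 0 + ℓ ≤ g ℓ := by
  induction ℓ with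
  | zero => simp
  | succ m ih =>
    have h1 := ih (fun i hi => h i (Nat.lt_succ_of_lt hi))
    have h2 := h m (Nat.lt_succ_self m)
    omega

lemma UB_append {Q : Type} (B : ℕ → Set Q) (β : List ℕ) (j : ℕ) :
    UB B (β ++ [j]) = UB B β ∪ B j := by
  ext q
  simp only [UB, Set.mem_setOf_eq, List.mem_append, List.mem_singleton, Set.mem_union]
  constructor
  · rintro ⟨j', h | rfl, hq⟩
    · exact Or.inl ⟨j', h, hq⟩
    · exact Or.inr hq
  · rintro (⟨j', h, hq⟩ | hq)
    · exact ⟨j', Or.inl h, hq⟩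
    · exact ⟨j, Or.inr rfl, hq⟩

lemma mini_bounds {Q : Type} [Fintype Q] {n k : ℕ} (hcard : Fintype.card Q = n)
    {B : ℕ → Set Q} {α : List ℕ} (hα : MiniIncreasing B k α) :
    (∀ x ∈ α, 1 ≤ x ∧ x ≤ k) ∧ 1 ≤ α.length ∧ α.length ≤ n ∧ α.length ≤ k := by
  obtain ⟨hne, hmini⟩ := hα
  have hlen1 : 1 ≤ α.length := List.length_pos_iff.mpr hne
  -- basic facts at each position
  have key : ∀ i (hi : i < α.length),
      1 ≤ α[i] ∧ α[i] ≤ k ∧ ¬ (B α[i] ⊆ UB B (α.take i)) ∧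
      α.take (i+1) = α.take i ++ [α[i]] := by
    intro i hi
    have hm := hmini i α[i] (List.getElem?_eq_getElem hi)
    obtain ⟨⟨h1, h2, h3⟩, _⟩ := hm
    refine ⟨h1, h2, ?_, ?_⟩
    · intro hsub
      exact h3 ⟨h1, h2, hsub⟩
    · rw [List.take_succ, List.getElem?_eq_getElem hi]
      rfl
  constructor
  · intro x hx
    obtain ⟨i, hi, rfl⟩ := List.mem_iff_getElem.mp hx
    exact ⟨(key i hi).1, (key i hi).2.1⟩
  refine ⟨hlen1, ?_, ?_⟩
  · -- length ≤ n via strictly growing UB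
    have hg : ∀ i < α.length,
        (UB B (α.take i)).ncard < (UB B (α.take (i+1))).ncard := by
      intro i hi
      obtain ⟨h1, h2, hns, heq⟩ := key i hi
      refine Set.ncard_lt_ncard ?_ (Set.toFinite _)
      rw [heq, UB_append]
      constructor
      · exact Set.subset_union_left
      · intro hsub
        exact hns fun q hq => hsub (Set.mem_union_right _ hq)
    have := aux_chain (fun i => (UB B (α.take i)).ncard) α.length hg
    have h0 : UB B (α.take 0) = ∅ := by
      simp [UB]
    have hle : (UB B (α.take α.length)).ncard ≤ n := by
      calc (UB B (α.take α.length)).ncard ≤ (Set.univ : Set Q).ncard :=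
            Set.ncard_le_ncard (Set.subset_univ _) Set.finite_univ
        _ = n := by rw [Set.ncard_univ, Nat.card_eq_fintype_card, hcard]
    simp only [h0, Set.ncard_empty] at this
    omega
  · -- length ≤ k via strictly growing Cover
    have hfin : ∀ β : List ℕ, (Cover B k β).Finite := by
      intro β
      apply (Set.finite_Icc 1 k).subset
      rintro j ⟨h1, h2, _⟩
      exact ⟨h1, h2⟩
    have hg : ∀ i < α.length,
        (Cover B k (α.take i)).ncard < (Cover B k (α.take (i+1))).ncard := by
      intro i hi
      obtain ⟨h1, h2, hns, heq⟩ := key i hi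
      refine Set.ncard_lt_ncard ?_ (hfin _)
      rw [heq]
      constructor
      · rintro j ⟨hj1, hj2, hj3⟩
        refine ⟨hj1, hj2, hj3.trans ?_⟩
        rw [UB_append]
        exact Set.subset_union_left
      · intro hsub
        have : α[i] ∈ Cover B k (α.take i ++ [α[i]]) := by
          refine ⟨h1, h2, ?_⟩
          rw [UB_append]
          exact Set.subset_union_right
        obtain ⟨_, _, h3⟩ := hsub this
        exact hns h3
    have := aux_chain (fun i => (Cover B k (α.take i)).ncard) α.length hg
    have this' : (Cover B k (α.take 0)).ncard + α.length ≤
        (Cover B k (α.take α.length)).ncard := this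
    have hle : (Cover B k (α.take α.length)).ncard ≤ k := by
      calc (Cover B k (α.take α.length)).ncard ≤ (Set.Icc 1 k).ncard := by
            refine Set.ncard_le_ncard ?_ (Set.finite_Icc 1 k)
            rintro j ⟨h1, h2, _⟩
            exact ⟨h1, h2⟩
        _ = k := by
            rw [← Nat.card_coe_set_eq, Nat.card_eq_fintype_card]
            simp
    omega

theorem miniIncreasing_count_le
    {Q : Type} [Fintype Q] (n k : ℕ) (hn : 1 ≤ n) (hk : 1 ≤ k)
    (hcard : Fintype.card Q = n) (B : ℕ → Set Q) :
    {α : List ℕ | MiniIncreasing B k α}.ncard ≤ min n k * k ^ min n k := by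
  set μ := min n k with hμdef
  have hμ : 1 ≤ μ := le_min hn hk
  set f : List ℕ → Fin μ × (Fin μ → Fin k) := fun α =>
    (⟨min (α.length - 1) (μ - 1), by omega⟩,
     fun i => ⟨min (α.getD i 1 - 1) (k - 1), by omega⟩) with hf
  have hinj : Set.InjOn f {α : List ℕ | MiniIncreasing B k α} := by
    intro α hαS β hβS heq
    obtain ⟨hαb, hα1, hαn, hαk⟩ := mini_bounds hcard hαS
    obtain ⟨hβb, hβ1, hβn, hβk⟩ := mini_bounds hcard hβS
    have hαμ : α.length ≤ μ := le_min hαn hαk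
    have hβμ : β.length ≤ μ := le_min hβn hβk
    have hlen : α.length = β.length := by
      have h1 := congrArg (fun x => (x.1 : ℕ)) heq
      simp only [hf] at h1
      omega
    refine List.ext_getElem hlen ?_
    intro i hiα hiβ
    have hiμ : i < μ := lt_of_lt_of_le hiα hαμ
    have h2 : (f α).2 ⟨i, hiμ⟩ = (f β).2 ⟨i, hiμ⟩ := by rw [heq]
    simp only [hf] at h2
    have h2' : min (α.getD i 1 - 1) (k - 1) = min (β.getD i 1 - 1) (k - 1) :=
      congrArg Fin.val h2
    rw [List.getD_eq_getElem _ _ hiα, List.getD_eq_getElem _ _ hiβ] at h2'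
    have ha := hαb α[i] (List.getElem_mem hiα)
    have hb := hβb β[i] (List.getElem_mem hiβ)
    omega
  calc {α : List ℕ | MiniIncreasing B k α}.ncard
      ≤ (Set.univ : Set (Fin μ × (Fin μ → Fin k))).ncard :=
        Set.ncard_le_ncard_of_injOn f (fun a _ => Set.mem_univ _) hinj Set.finite_univ
    _ = μ * k ^ μ := by
        rw [Set.ncard_univ, Nat.card_eq_fintype_card]
        simp
end

section
/- Let B : I → 2^Q and B' : I → 2^Q be two injective functions with the same range. Then |T(n, k, B)| = |T(n, k, B')|; i.e., the number of Mini-increasing sequences with respect to B equals the number of Mini-increasing sequences with respect to B'. -/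
/-!
A Mini step from the current union `U` is determined by the new union `V = B j ∪ U`: the
admissible `V` are the minimal proper extensions of `U` of the form `s ∪ U` with `s` in the
range of `B`, and `j` is recovered as the least index with `B j ∪ U = V`. Hence sending a
sequence to its list of partial unions is a bijection from the Mini-increasing sequences onto
the nonempty chains of successive minimal extensions, and this set of chains depends on `B`
only through its range.
-/

section
variable {Q : Type}

theorem UB_nil (B : ℕ → Set Q) : UB B [] = ∅ := by
  simp [UB]

theorem UB_append_singleton (B : ℕ → Set Q) (β : List ℕ) (j : ℕ) :
    UB B (β ++ [j]) = B j ∪ UB B β := by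
  ext q
  simp [UB, or_comm]

def minimalExtensions (R : Set (Set Q)) (U : Set Q) : Set (Set Q) :=
  {V | Minimal (· ∈ (· ∪ U) '' R \ {U}) V}

def IsMiniStep (B : ℕ → Set Q) (k : ℕ) (U : Set Q) (j : ℕ) : Prop :=
  B j ∪ U ∈ minimalExtensions (B '' Set.Icc 1 k) U ∧
    IsLeast {m | m ∈ Set.Icc 1 k ∧ B m ∪ U = B j ∪ U} j

theorem mem_mini_iff (B : ℕ → Set Q) (k : ℕ) (α : List ℕ) (j : ℕ) :
    j ∈ Mini B k α ↔ IsMiniStep B k (UB B α) j := by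
  have not_mem_cover {m : ℕ} (hm : m ∈ Set.Icc 1 k) :
      m ∉ Cover B k α ↔ B m ∪ UB B α ≠ UB B α := by
    simp [Cover, hm.1, hm.2, Set.union_eq_right]
  set U := UB B α
  constructor
  · rintro ⟨⟨h1, h2, hj⟩, hmin⟩
    have hjI : j ∈ Set.Icc 1 k := ⟨h1, h2⟩
    rw [not_mem_cover hjI] at hj
    refine ⟨⟨⟨⟨B j, ⟨j, hjI, rfl⟩, rfl⟩, hj⟩, ?_⟩, ⟨hjI, rfl⟩, ?_⟩
    · rintro _ ⟨⟨_, ⟨j', hj'I, rfl⟩, rfl⟩, hj'⟩ hle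
      rcases eq_or_ne j' j with rfl | hne
      · exact le_rfl
      · have hnot := (hmin j' hj'I.1 hj'I.2 ((not_mem_cover hj'I).mpr hj')).1 hne
        exact (hle.lt_or_eq.resolve_left hnot).ge
    · rintro m ⟨hmI, hm⟩
      by_contra! hlt
      refine (hmin m hmI.1 hmI.2 ((not_mem_cover hmI).mpr ?_)).2 hlt hm
      rwa [hm]
  · rintro ⟨⟨⟨-, hj⟩, hmin⟩, ⟨hjI, -⟩, hleast⟩
    refine ⟨⟨hjI.1, hjI.2, (not_mem_cover hjI).mpr hj⟩,
      fun j' h1 h2 hj' => ⟨fun _ hlt => ?_, fun hlt heq => ?_⟩⟩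
    · have hj'ext : B j' ∪ U ∈ (· ∪ U) '' (B '' Set.Icc 1 k) \ {U} :=
        ⟨⟨B j', ⟨j', ⟨h1, h2⟩, rfl⟩, rfl⟩, (not_mem_cover ⟨h1, h2⟩).mp hj'⟩
      exact hlt.not_ge (hmin hj'ext hlt.le)
    · exact (hleast ⟨⟨h1, h2⟩, heq⟩).not_gt hlt

def IsMiniSeqFrom (B : ℕ → Set Q) (k : ℕ) : Set Q → List ℕ → Prop
  | _, [] => True
  | U, j :: α => IsMiniStep B k U j ∧ IsMiniSeqFrom B k (B j ∪ U) α

theorem forall_mem_mini_append_take_iff (B : ℕ → Set Q) (k : ℕ) (α β : List ℕ) :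
    (∀ i j, α[i]? = some j → j ∈ Mini B k (β ++ α.take i)) ↔
      IsMiniSeqFrom B k (UB B β) α := by
  induction α generalizing β with
  | nil => simp [IsMiniSeqFrom]
  | cons a α ih =>
    rw [IsMiniSeqFrom, ← mem_mini_iff, ← UB_append_singleton, ← ih, ← Nat.and_forall_add_one]
    simp

theorem miniIncreasing_iff (B : ℕ → Set Q) (k : ℕ) (α : List ℕ) :
    MiniIncreasing B k α ↔ α ≠ [] ∧ IsMiniSeqFrom B k ∅ α := by
  simp only [MiniIncreasing, ← UB_nil B, ← forall_mem_mini_append_take_iff, List.nil_append]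

def partialUnions (B : ℕ → Set Q) : Set Q → List ℕ → List (Set Q)
  | _, [] => []
  | U, j :: α => (B j ∪ U) :: partialUnions B (B j ∪ U) α

theorem partialUnions_eq_nil_iff (B : ℕ → Set Q) (U : Set Q) (α : List ℕ) :
    partialUnions B U α = [] ↔ α = [] := by
  cases α <;> simp [partialUnions]

def IsMinimalChain (R : Set (Set Q)) : Set Q → List (Set Q) → Prop
  | _, [] => True
  | U, V :: vs => V ∈ minimalExtensions R U ∧ IsMinimalChain R V vs

theorem IsMiniSeqFrom.isMinimalChain_partialUnions {B : ℕ → Set Q} {k : ℕ} :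
    ∀ {U : Set Q} {α : List ℕ}, IsMiniSeqFrom B k U α →
      IsMinimalChain (B '' Set.Icc 1 k) U (partialUnions B U α)
  | _, [], _ => trivial
  | _, _ :: _, ⟨hj, hα⟩ => ⟨hj.1, hα.isMinimalChain_partialUnions⟩

theorem IsMiniSeqFrom.eq_of_partialUnions_eq {B : ℕ → Set Q} {k : ℕ} :
    ∀ {U : Set Q} {α β : List ℕ}, IsMiniSeqFrom B k U α → IsMiniSeqFrom B k U β →
      partialUnions B U α = partialUnions B U β → α = β
  | _, [], [], _, _, _ => rfl
  | _, i :: α, j :: β, ⟨hi, hα⟩, ⟨hj, hβ⟩, h => by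
    obtain ⟨hij, hαβ⟩ := List.cons.inj h
    obtain rfl : i = j := hi.2.unique (by simpa only [hij] using hj.2)
    rw [hα.eq_of_partialUnions_eq hβ hαβ]

theorem exists_isMiniSeqFrom_of_isMinimalChain {B : ℕ → Set Q} {k : ℕ} :
    ∀ {U : Set Q} {vs : List (Set Q)}, IsMinimalChain (B '' Set.Icc 1 k) U vs →
      ∃ α, IsMiniSeqFrom B k U α ∧ partialUnions B U α = vs
  | _, [], _ => ⟨[], trivial, rfl⟩
  | U, V :: vs, ⟨hV, hvs⟩ => by
    obtain ⟨⟨_, ⟨m, hm, rfl⟩, hmV⟩, -⟩ := hV.1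
    obtain ⟨j, hj⟩ : ∃ j, IsLeast {m | m ∈ Set.Icc 1 k ∧ B m ∪ U = V} j :=
      ⟨_, isLeast_csInf (s := {m | m ∈ Set.Icc 1 k ∧ B m ∪ U = V}) ⟨m, hm, hmV⟩⟩
    obtain ⟨α, hα, rfl⟩ := exists_isMiniSeqFrom_of_isMinimalChain (B := B) hvs
    have hjV : B j ∪ U = V := hj.1.2
    subst hjV
    exact ⟨j :: α, ⟨⟨hV, hj⟩, hα⟩, rfl⟩

theorem ncard_miniIncreasing_eq_ncard_minimalChains (B : ℕ → Set Q) (k : ℕ) :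
    {α | MiniIncreasing B k α}.ncard =
      {vs | vs ≠ [] ∧ IsMinimalChain (B '' Set.Icc 1 k) ∅ vs}.ncard := by
  simp only [miniIncreasing_iff]
  refine Set.ncard_congr (fun α _ => partialUnions B ∅ α) ?_ ?_ ?_
  · rintro α ⟨hne, hα⟩
    exact ⟨(partialUnions_eq_nil_iff B ∅ α).not.mpr hne, hα.isMinimalChain_partialUnions⟩
  · rintro α β ⟨-, hα⟩ ⟨-, hβ⟩ h
    exact hα.eq_of_partialUnions_eq hβ h
  · rintro vs ⟨hne, hvs⟩
    obtain ⟨α, hα, rfl⟩ := exists_isMiniSeqFrom_of_isMinimalChain hvs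
    exact ⟨α, ⟨(partialUnions_eq_nil_iff B ∅ α).not.mp hne, hα⟩, rfl⟩

end

theorem miniIncreasing_count_relabel_general
    {Q : Type} (k : ℕ) (B B' : ℕ → Set Q)
    (hrange : B '' Set.Icc 1 k = B' '' Set.Icc 1 k) :
    {α : List ℕ | MiniIncreasing B k α}.ncard
      = {α : List ℕ | MiniIncreasing B' k α}.ncard := by
  rw [ncard_miniIncreasing_eq_ncard_minimalChains, ncard_miniIncreasing_eq_ncard_minimalChains,
    hrange]

theorem miniIncreasing_count_relabel
    {Q : Type} [Fintype Q] (n k : ℕ) (hn : 1 ≤ n) (hk : 1 ≤ k)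
    (hcard : Fintype.card Q = n) (B B' : ℕ → Set Q)
    (hinjB : Set.InjOn B (Set.Icc 1 k))
    (hinjB' : Set.InjOn B' (Set.Icc 1 k))
    (hrange : B '' Set.Icc 1 k = B' '' Set.Icc 1 k) :
    {α : List ℕ | MiniIncreasing B k α}.ncard
      = {α : List ℕ | MiniIncreasing B' k α}.ncard :=
  miniIncreasing_count_relabel_general k B B' hrange
end

section
/- Let 𝒢 be a leveled graph over a finite set Q, let F ⊆ Q, and let W be a nonempty set of vertices of 𝒢 such that every vertex in W has at least one successor in W (i.e., for every v ∈ W there is v' ∈ W with (v, v') ∈ E). If every infinite path in 𝒢 visits F-vertices only finitely often, then there exists a vertex v ∈ W that is F-free within W: v is not an F-vertex and no vertex of W reachable from v by a nonempty path staying inside W is an F-vertex. -/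
/-!
STATEMENT 16: Let 𝒢 be a leveled graph over a finite set Q, let F ⊆ Q, and
let W be a nonempty set of vertices of 𝒢 such that every vertex in W has at
least one successor in W. If every infinite path in 𝒢 visits F-vertices only
finitely often, then there exists a vertex v ∈ W that is F-free within W:
v is not an F-vertex and no vertex of W reachable from v by a nonempty path
staying inside W is an F-vertex.
-/

theorem exists_F_free_vertex
    {Q : Type} [Fintype Q]
    (E : Q × ℕ → Q × ℕ → Prop)
    (hE : ∀ v v' : Q × ℕ, E v v' → v'.2 = v.2 + 1)
    (F : Set Q) (W : Set (Q × ℕ))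
    (hne : W.Nonempty)
    (hsucc : ∀ v ∈ W, ∃ v' ∈ W, E v v')
    (hacc : ∀ ρ : ℕ → Q × ℕ, (∀ i, E (ρ i) (ρ (i + 1))) →
      {i | (ρ i).1 ∈ F}.Finite) :
    ∃ v ∈ W, v.1 ∉ F ∧
      ∀ v', Relation.TransGen (fun a b => a ∈ W ∧ b ∈ W ∧ E a b) v v' →
        v'.1 ∉ F := by
  by_contra hcon
  push_neg at hcon
  set step : Q × ℕ → Q × ℕ → Prop := fun a b => a ∈ W ∧ b ∈ W ∧ E a b with hstepdef
  -- level lemmas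
  have lvl_le : ∀ a b : Q × ℕ, Relation.ReflTransGen step a b → a.2 ≤ b.2 := by
    intro a b hab
    induction hab with
    | refl => exact le_refl _
    | tail h e ih => exact ih.trans (by rw [hE _ _ e.2.2]; omega)
  have lvl_lt : ∀ a b : Q × ℕ, Relation.TransGen step a b → a.2 < b.2 := by
    intro a b hab
    induction hab with
    | single e => rw [hE _ _ e.2.2]; omega
    | tail h e ih => rw [hE _ _ e.2.2]; omega
  -- for every w ∈ W, some F-vertex is refl-reachable
  have exP : ∀ w ∈ W, ∃ n, ∃ w', Relation.ReflTransGen step w w' ∧ w'.1 ∈ F ∧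
      w'.2 = w.2 + n := by
    intro w hw
    by_cases hF : w.1 ∈ F
    · exact ⟨0, w, Relation.ReflTransGen.refl, hF, rfl⟩
    · rcases hcon w hw hF with ⟨w', hw', hF'⟩
      have hl := lvl_lt w w' hw'
      exact ⟨w'.2 - w.2, w', hw'.to_reflTransGen, hF', by omega⟩
  set m : Q × ℕ → ℕ := fun w =>
    sInf {n | ∃ w', Relation.ReflTransGen step w w' ∧ w'.1 ∈ F ∧ w'.2 = w.2 + n} with hmdef
  have hmem : ∀ w ∈ W, ∃ w', Relation.ReflTransGen step w w' ∧ w'.1 ∈ F ∧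
      w'.2 = w.2 + m w := by
    intro w hw
    have : {n | ∃ w', Relation.ReflTransGen step w w' ∧ w'.1 ∈ F ∧
        w'.2 = w.2 + n}.Nonempty := exP w hw
    exact Nat.sInf_mem this
  have hzero : ∀ w ∈ W, m w = 0 → w.1 ∈ F := by
    intro w hw h0
    rcases hmem w hw with ⟨w', hr, hF, hl⟩
    rw [h0] at hl
    rcases (Relation.reflTransGen_iff_eq_or_transGen.mp hr) with rfl | ht
    · exact hF
    · have := lvl_lt w w' ht; omega
  -- choice of next step
  have hstep : ∀ w ∈ W, ∃ w1, step w w1 ∧ (m w ≠ 0 → m w1 < m w) := by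
    intro w hw
    by_cases h0 : m w = 0
    · rcases hsucc w hw with ⟨w1, hw1, he⟩
      exact ⟨w1, ⟨hw, hw1, he⟩, fun h => absurd h0 h⟩
    · rcases hmem w hw with ⟨w', hr, hF, hl⟩
      rcases hr.cases_head with rfl | ⟨w1, hs, hr1⟩
      · omega
      · refine ⟨w1, hs, fun _ => ?_⟩
        have hl1 : w1.2 = w.2 + 1 := hE _ _ hs.2.2
        have : m w1 ≤ m w - 1 := Nat.sInf_le ⟨w', hr1, hF, by omega⟩
        omega
  choose f hf1 hf2 using hstep
  rcases hne with ⟨w0, hw0⟩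
  set g : {v // v ∈ W} → {v // v ∈ W} :=
    fun p => ⟨f p.1 p.2, (hf1 p.1 p.2).2.1⟩ with hgdef
  set ρ : ℕ → {v // v ∈ W} := fun n => g^[n] ⟨w0, hw0⟩ with hrdef
  have hrsucc : ∀ n, ρ (n + 1) = g (ρ n) := by
    intro n; simp [hrdef, Function.iterate_succ_apply']
  have hedge : ∀ n, E (ρ n).1 (ρ (n + 1)).1 := by
    intro n; rw [hrsucc n]; exact (hf1 (ρ n).1 (ρ n).2).2.2
  -- F visited beyond any point
  have hvisit : ∀ n i, m (ρ i).1 ≤ n → ∃ j, i ≤ j ∧ ((ρ j).1).1 ∈ F := by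
    intro n
    induction n with
    | zero =>
      intro i hi
      exact ⟨i, le_refl _, hzero _ (ρ i).2 (Nat.le_zero.mp hi)⟩
    | succ n ih =>
      intro i hi
      by_cases h0 : m (ρ i).1 = 0
      · exact ⟨i, le_refl _, hzero _ (ρ i).2 h0⟩
      · have hlt : m (ρ (i + 1)).1 < m (ρ i).1 := by
          rw [hrsucc i]; exact hf2 (ρ i).1 (ρ i).2 h0
        rcases ih (i + 1) (by omega) with ⟨j, hj, hF⟩
        exact ⟨j, by omega, hF⟩
  have hfin := hacc (fun n => (ρ n).1) hedge
  rcases hfin.bddAbove with ⟨N, hN⟩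
  rcases hvisit (m (ρ (N + 1)).1) (N + 1) (le_refl _) with ⟨j, hj, hF⟩
  have : j ≤ N := hN hF
  omega
end
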